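/- Let k be a field of characteristic p > 0 and let f : A → B be a homomorphism of commutative k-algebras such that (1) every element of the kernel of f is nilpotent, and (2) for every b ∈ B there exists r ≥ 0 with b^{p^r} in the image of f. Then the induced map Spec B → Spec A on prime spectra is a homeomorphism. -/

import Mathlib

theorem stmt2_general {k A B : Type} [Field k] (p : ℕ) [Fact p.Prime]
    [CommRing A] [Algebra k A] [CommRing B] [Algebra k B]
    (f : A →ₐ[k] B)
    (hker : ∀ a ∈ RingHom.ker f.toRingHom, IsNilpotent a)
    (hpow : ∀ b : B, ∃ r : ℕ, b ^ (p ^ r) ∈ Set.range f) :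
    ∃ h : PrimeSpectrum B ≃ₜ PrimeSpectrum A,
      (h : PrimeSpectrum B → PrimeSpectrum A) = PrimeSpectrum.comap f.toRingHom := by
  have hpos_pow (b : B) : ∃ n > 0, b ^ n ∈ f.toRingHom.range := by
    obtain ⟨r, hr⟩ := hpow b
    exact ⟨p ^ r, pow_pos ‹Fact p.Prime›.out.pos r, hr⟩
  exact ⟨(PrimeSpectrum.isHomeomorph_comap _ hpos_pow hker).homeomorph, rfl⟩

/-- If `f : A → B` is a homomorphism of commutative algebras over a field of
characteristic `p > 0` with nilpotent kernel and such that every `b : B` has some `p^r`-th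
power in the image of `f`, then `Spec B → Spec A` is a homeomorphism. -/
theorem stmt2 {k A B : Type} [Field k] (p : ℕ) [Fact p.Prime] [CharP k p]
    [CommRing A] [Algebra k A] [CommRing B] [Algebra k B]
    (f : A →ₐ[k] B)
    (hker : ∀ a ∈ RingHom.ker f.toRingHom, IsNilpotent a)
    (hpow : ∀ b : B, ∃ r : ℕ, b ^ (p ^ r) ∈ Set.range f) :
    ∃ h : PrimeSpectrum B ≃ₜ PrimeSpectrum A,
      (h : PrimeSpectrum B → PrimeSpectrum A) = PrimeSpectrum.comap f.toRingHom :=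
  stmt2_general p f hker hpow
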